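/- Every mixed quantum strategy μ is equivalent to a mixed quantum strategy supported on at most four points; moreover these points can be taken to be four unit quaternions q₁, q₂, q₃, q₄ forming an orthonormal basis of ℍ ≅ ℝ⁴ (with respect to the standard inner product ⟨p,q⟩ = Σ_t π_t(p)π_t(q)). -/

import Mathlib

noncomputable section

open MeasureTheory

local notation "ℍ" => Quaternion ℝ

instance : MeasurableSpace (Quaternion ℝ) := borel _
instance : BorelSpace (Quaternion ℝ) := ⟨rfl⟩

/-- The four real coordinates of a quaternion: `p = π₁(p) + π₂(p)i + π₃(p)j + π₄(p)k`. -/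
def piQ (t : Fin 4) (p : ℍ) : ℝ := ![p.re, p.imI, p.imJ, p.imK] t

/-- The standard inner product on ℍ ≅ ℝ⁴. -/
def qinner (p q : ℍ) : ℝ := ∑ t : Fin 4, piQ t p * piQ t q

/-- The quaternions `i`, `j`, `k`. -/
def qI : ℍ := ⟨0, 1, 0, 0⟩
def qJ : ℍ := ⟨0, 0, 1, 0⟩
def qK : ℍ := ⟨0, 0, 0, 1⟩

/-- A mixed quantum strategy: a Borel probability measure on the unit quaternions. -/
def IsMixed (μ : Measure ℍ) : Prop :=
  IsProbabilityMeasure μ ∧ μ {p : ℍ | ‖p‖ = 1} = 1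

/-- Quantum payoff with payoff vector `X`: `P^Q(p,q) = Σ_t π_t(pq)² X_t`. -/
def payoff (X : Fin 4 → ℝ) (p q : ℍ) : ℝ :=
  ∑ t : Fin 4, (piQ t (p * q)) ^ 2 * X t

/-- Expected payoff of a pair of mixed strategies. -/
def payoffM (X : Fin 4 → ℝ) (ν μ : Measure ℍ) : ℝ :=
  ∫ p, ∫ q, payoff X p q ∂μ ∂ν

/-- Mixed-strategy Nash equilibrium of the quantum game with payoff vectors `X`, `Y`. -/
def IsNash (X Y : Fin 4 → ℝ) (ν μ : Measure ℍ) : Prop :=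
  IsMixed ν ∧ IsMixed μ ∧
    (∀ ν' : Measure ℍ, IsMixed ν' → payoffM X ν' μ ≤ payoffM X ν μ) ∧
    (∀ μ' : Measure ℍ, IsMixed μ' → payoffM Y ν μ' ≤ payoffM Y ν μ)

/-- Equivalence of mixed quantum strategies. -/
def StratEquiv (μ μ' : Measure ℍ) : Prop :=
  ∀ p : ℍ, ‖p‖ = 1 → ∀ t : Fin 4,
    ∫ q, (piQ t (p * q)) ^ 2 ∂μ = ∫ q, (piQ t (p * q)) ^ 2 ∂μ'

/-- Equivalence of pairs of mixed strategies: `(ν,μ) ∼ (ν',μ')` iff there is a unit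
quaternion `u` with `ν' ∼ ν·u` and `μ' ∼ u⁻¹·μ`. -/
def PairEquiv (ν μ ν' μ' : Measure ℍ) : Prop :=
  ∃ u : ℍ, ‖u‖ = 1 ∧
    StratEquiv (Measure.map (fun p => p * u) ν) ν' ∧
    StratEquiv (Measure.map (fun q => u⁻¹ * q) μ) μ'

/-- A generic two-by-two game: all payoffs distinct and all pairwise sums distinct. -/
def Generic (X Y : Fin 4 → ℝ) : Prop :=
  Function.Injective X ∧ Function.Injective Y ∧
    (∀ s t s' t' : Fin 4, s < t → s' < t' → X s + X t = X s' + X t' → s = s' ∧ t = t') ∧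
    (∀ s t s' t' : Fin 4, s < t → s' < t' → Y s + Y t = Y s' + Y t' → s = s' ∧ t = t')

/-- `K(p) = π₁(p)π₂(p)π₃(p)π₄(p)`. -/
def K (p : ℍ) : ℝ := p.re * p.imI * p.imJ * p.imK

/-- Intertwined quadruple of quaternions. -/
def Intertwined (p q r s : ℍ) : Prop :=
  ∃ α : ℝ, α ≠ 0 ∧ ∀ X Y : ℝ, α * K (X • p + Y • q) = K (X • r + Y • s)

/-- Fully intertwined quadruple of quaternions. -/
def FullyIntertwined (p q r s : ℍ) : Prop :=
  Intertwined p q r s ∧ Intertwined p r q s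

/-- `p` is an optimal response for Player One to the mixed strategy `μ`. -/
def Optimal₁ (X : Fin 4 → ℝ) (μ : Measure ℍ) (p : ℍ) : Prop :=
  ‖p‖ = 1 ∧ ∀ p' : ℍ, ‖p'‖ = 1 → ∫ q, payoff X p' q ∂μ ≤ ∫ q, payoff X p q ∂μ

/-- `q` is an optimal response for Player Two to the mixed strategy `ν`. -/
def Optimal₂ (Y : Fin 4 → ℝ) (ν : Measure ℍ) (q : ℍ) : Prop :=
  ‖q‖ = 1 ∧ ∀ q' : ℍ, ‖q'‖ = 1 → ∫ p, payoff Y p q' ∂ν ≤ ∫ p, payoff Y p q ∂ν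

/-! Since `π_t(p q)` is a linear form in the coordinates of `q`, the integrals defining equivalence
depend on `μ` only through its second-moment matrix `M s t = ∫ π_s(q) π_t(q) dμ(q)`. This matrix is
positive semidefinite with trace `1` (as `‖q‖ = 1` almost surely), so by the spectral theorem
`M = ∑ λᵢ vᵢ vᵢᵀ` with `λᵢ ≥ 0`, `∑ λᵢ = 1` and `(vᵢ)` orthonormal; the measure `∑ λᵢ δ_{vᵢ}`
has the same second moments. -/

open Matrix

namespace Matrix.IsHermitian

variable {𝕜 n : Type*} [RCLike 𝕜] [Fintype n] [DecidableEq n] {A : Matrix n n 𝕜}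

theorem eq_sum_eigenvalues_smul_vecMulVec (hA : A.IsHermitian) :
    A = ∑ i, hA.eigenvalues i •
      vecMulVec ⇑(hA.eigenvectorBasis i) (star ⇑(hA.eigenvectorBasis i)) := by
  conv_lhs => rw [hA.spectral_theorem]
  ext s t
  simp only [Unitary.conjStarAlgAut_apply, mul_apply, diagonal_apply, Matrix.sum_apply, smul_apply,
    vecMulVec_apply, RCLike.real_smul_eq_coe_mul]
  simp only [eigenvectorUnitary_apply, Function.comp_apply, mul_ite, mul_zero,
    Finset.sum_ite_eq', Finset.mem_univ, ↓reduceIte, star_apply, RCLike.star_def, Pi.star_apply]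
  exact Finset.sum_congr rfl fun _ _ => by ring

end Matrix.IsHermitian

section MomentMatrix

variable {α ι κ : Type*} [MeasurableSpace α] {μ : Measure α} {f : ι → α → ℝ}

def momentMatrix (μ : Measure α) (f : ι → α → ℝ) : Matrix ι ι ℝ :=
  of fun s t => ∫ x, f s x * f t x ∂μ

theorem integral_sq_sum_eq_dotProduct_momentMatrix [Fintype ι]
    (hf : ∀ s t, Integrable (fun x => f s x * f t x) μ) (c : ι → ℝ) :
    ∫ x, (∑ s, c s * f s x) ^ 2 ∂μ = c ⬝ᵥ (momentMatrix μ f *ᵥ c) := by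
  have hsq : ∀ x, (∑ s, c s * f s x) ^ 2 = ∑ s, ∑ t, c s * c t * (f s x * f t x) := fun x => by
    rw [sq, Finset.sum_mul_sum]
    exact Finset.sum_congr rfl fun s _ => Finset.sum_congr rfl fun t _ => by ring
  simp_rw [hsq]
  rw [integral_finsetSum _ fun s _ => integrable_finsetSum _ fun t _ => (hf s t).const_mul _]
  simp_rw [integral_finsetSum _ fun t _ => (hf _ t).const_mul _, integral_const_mul]
  simp only [dotProduct, mulVec, momentMatrix, of_apply, Finset.mul_sum]
  exact Finset.sum_congr rfl fun s _ => Finset.sum_congr rfl fun t _ => by ring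

theorem posSemidef_momentMatrix [Fintype ι] (hf : ∀ s t, Integrable (fun x => f s x * f t x) μ) :
    (momentMatrix μ f).PosSemidef := by
  refine PosSemidef.of_dotProduct_mulVec_nonneg ?_ fun c => ?_
  · ext s t
    simp [momentMatrix, mul_comm]
  · rw [star_trivial, ← integral_sq_sum_eq_dotProduct_momentMatrix hf]
    exact integral_nonneg fun x => sq_nonneg _

theorem trace_momentMatrix [Fintype ι] (hf : ∀ s, Integrable (fun x => f s x * f s x) μ) :
    (momentMatrix μ f).trace = ∫ x, ∑ s, f s x ^ 2 ∂μ := by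
  simp_rw [trace, diag, momentMatrix, of_apply, sq]
  exact (integral_finsetSum _ fun s _ => hf s).symm

theorem momentMatrix_sum_smul_dirac [Fintype κ] [MeasurableSingletonClass α] {w : κ → ℝ}
    (hw : ∀ i, 0 ≤ w i) (x : κ → α) :
    momentMatrix (∑ i, ENNReal.ofReal (w i) • Measure.dirac (x i)) f =
      ∑ i, w i • vecMulVec (fun s => f s (x i)) (fun s => f s (x i)) := by
  ext s t
  rw [momentMatrix, of_apply, integral_finsetSum_measure fun i _ =>
    (integrable_dirac enorm_lt_top).smul_measure ENNReal.ofReal_ne_top]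
  simp [integral_smul_measure, ENNReal.toReal_ofReal (hw _), Matrix.sum_apply, vecMulVec_apply]

theorem sum_smul_dirac_apply_eq_one [Fintype κ] {w : κ → ℝ} (hw : ∀ i, 0 ≤ w i)
    (hw1 : ∑ i, w i = 1) {x : κ → α} {S : Set α} (hS : ∀ i, x i ∈ S) :
    (∑ i, ENNReal.ofReal (w i) • Measure.dirac (x i)) S = 1 := by
  simp [Measure.dirac_apply_of_mem (hS _), ← ENNReal.ofReal_sum_of_nonneg fun i _ => hw i, hw1]

end MomentMatrix

open scoped InnerProductSpace

theorem piQ_eq_linearIsometryEquivTuple (t : Fin 4) (p : ℍ) :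
    piQ t p = Quaternion.linearIsometryEquivTuple p t := rfl

theorem piQ_linearIsometryEquivTuple_symm (t : Fin 4) (v : EuclideanSpace ℝ (Fin 4)) :
    piQ t (Quaternion.linearIsometryEquivTuple.symm v) = v t := by
  rw [piQ_eq_linearIsometryEquivTuple, LinearIsometryEquiv.apply_symm_apply]

theorem abs_piQ_le_norm (t : Fin 4) (q : ℍ) : |piQ t q| ≤ ‖q‖ := by
  rw [piQ_eq_linearIsometryEquivTuple, ← Real.norm_eq_abs,
    ← Quaternion.linearIsometryEquivTuple.norm_map q]
  exact PiLp.norm_apply_le _ t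

theorem qinner_eq_inner (p q : ℍ) :
    qinner p q =
      ⟪Quaternion.linearIsometryEquivTuple p, Quaternion.linearIsometryEquivTuple q⟫_ℝ := by
  simp [qinner, piQ_eq_linearIsometryEquivTuple, PiLp.inner_apply, mul_comm]

theorem sum_piQ_sq (q : ℍ) : ∑ t, piQ t q ^ 2 = ‖q‖ ^ 2 := by
  rw [← Quaternion.linearIsometryEquivTuple.norm_map, ← real_inner_self_eq_norm_sq,
    ← qinner_eq_inner, qinner]
  simp_rw [sq]

theorem continuous_piQ (t : Fin 4) : Continuous (piQ t) :=
  (PiLp.continuous_apply 2 _ t).comp Quaternion.linearIsometryEquivTuple.continuous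

theorem exists_piQ_mul_eq_sum (p : ℍ) (t : Fin 4) :
    ∃ c : Fin 4 → ℝ, ∀ q, piQ t (p * q) = ∑ s, c s * piQ s q :=
  ⟨fun s => piQ t (p * ![1, qI, qJ, qK] s), fun q => by
    fin_cases t <;>
      simp [piQ, qI, qJ, qK, Fin.sum_univ_four, Quaternion.re_mul, Quaternion.imI_mul,
        Quaternion.imJ_mul, Quaternion.imK_mul, Quaternion.re_one, Quaternion.imI_one,
        Quaternion.imJ_one, Quaternion.imK_one] <;>
      ring⟩

namespace IsMixed

variable {μ : Measure ℍ}

theorem ae_norm_eq_one (hμ : IsMixed μ) : ∀ᵐ q ∂μ, ‖q‖ = 1 := by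
  have := hμ.1
  refine (ae_iff_measure_eq ?_).2 (by rw [hμ.2, measure_univ])
  exact (measurableSet_eq_fun continuous_norm.measurable measurable_const).nullMeasurableSet

theorem integrable_piQ_mul (hμ : IsMixed μ) (s t : Fin 4) :
    Integrable (fun q => piQ s q * piQ t q) μ := by
  have := hμ.1
  refine Integrable.of_bound ((continuous_piQ s).mul (continuous_piQ t)).aestronglyMeasurable 1 ?_
  filter_upwards [hμ.ae_norm_eq_one] with q hq
  rw [norm_mul, Real.norm_eq_abs, Real.norm_eq_abs, ← one_mul 1, ← hq]
  exact mul_le_mul (abs_piQ_le_norm s q) (abs_piQ_le_norm t q) (abs_nonneg _) (norm_nonneg q)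

theorem trace_momentMatrix_piQ (hμ : IsMixed μ) : (momentMatrix μ piQ).trace = 1 := by
  have := hμ.1
  rw [trace_momentMatrix fun s => hμ.integrable_piQ_mul s s,
    integral_congr_ae (hμ.ae_norm_eq_one.mono fun q hq => by rw [sum_piQ_sq, hq, one_pow])]
  simp

end IsMixed

theorem StratEquiv.of_momentMatrix_piQ_eq {μ ν : Measure ℍ} (hμ : IsMixed μ) (hν : IsMixed ν)
    (h : momentMatrix μ piQ = momentMatrix ν piQ) : StratEquiv μ ν := by
  intro p _ t
  obtain ⟨c, hc⟩ := exists_piQ_mul_eq_sum p t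
  simp_rw [hc, integral_sq_sum_eq_dotProduct_momentMatrix hμ.integrable_piQ_mul,
    integral_sq_sum_eq_dotProduct_momentMatrix hν.integrable_piQ_mul, h]

theorem exists_isMixed_orthonormal_support_momentMatrix_eq {M : Matrix (Fin 4) (Fin 4) ℝ}
    (hM : M.PosSemidef) (htr : M.trace = 1) :
    ∃ (q : Fin 4 → ℍ) (ν : Measure ℍ),
      (∀ i, ‖q i‖ = 1) ∧ (∀ i j, i ≠ j → qinner (q i) (q j) = 0) ∧
      IsMixed ν ∧ momentMatrix ν piQ = M ∧ ν (Set.range q) = 1 := by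
  set b := hM.isHermitian.eigenvectorBasis
  set w := hM.isHermitian.eigenvalues
  have hw1 : ∑ i, w i = 1 := by simpa [hM.isHermitian.trace_eq_sum_eigenvalues] using htr
  let q i := Quaternion.linearIsometryEquivTuple.symm (b i)
  let ν := ∑ i, ENNReal.ofReal (w i) • Measure.dirac (q i)
  have hν : ∀ S, (∀ i, q i ∈ S) → ν S = 1 := fun _ =>
    sum_smul_dirac_apply_eq_one hM.eigenvalues_nonneg hw1
  have hnorm : ∀ i, ‖q i‖ = 1 := fun i =>
    (Quaternion.linearIsometryEquivTuple.symm.norm_map _).trans (b.orthonormal.1 i)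
  refine ⟨q, ν, hnorm, fun i j hij => ?_, ⟨⟨hν _ fun _ => trivial⟩, hν _ hnorm⟩, ?_,
    hν _ Set.mem_range_self⟩
  · rw [qinner_eq_inner, LinearIsometryEquiv.apply_symm_apply,
      LinearIsometryEquiv.apply_symm_apply]
    exact b.orthonormal.2 hij
  · rw [momentMatrix_sum_smul_dirac hM.eigenvalues_nonneg]
    conv_rhs => rw [hM.isHermitian.eq_sum_eigenvalues_smul_vecMulVec]
    simp only [q, b, piQ_linearIsometryEquivTuple_symm, star_trivial]

/-- Every mixed quantum strategy is equivalent to one supported on (at most)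
four points, which may be taken to be four pairwise orthogonal unit quaternions
(an orthonormal basis of ℍ ≅ ℝ⁴). -/
theorem equiv_four_point_support (μ : Measure ℍ) (hμ : IsMixed μ) :
    ∃ (q : Fin 4 → ℍ) (ν : Measure ℍ),
      (∀ i, ‖q i‖ = 1) ∧ (∀ i j, i ≠ j → qinner (q i) (q j) = 0) ∧
      IsMixed ν ∧ StratEquiv μ ν ∧ ν (Set.range q) = 1 := by
  obtain ⟨q, ν, hnorm, horth, hν, hmoment, hsupp⟩ :=
    exists_isMixed_orthonormal_support_momentMatrix_eq
      (posSemidef_momentMatrix hμ.integrable_piQ_mul) hμ.trace_momentMatrix_piQ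
  exact ⟨q, ν, hnorm, horth, hν, .of_momentMatrix_piQ_eq hμ hν hmoment.symm, hsupp⟩
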